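/- Fix uniform bids b_{ij} = α_i v_{ij} with multipliers α_i ≥ 1 and an allocation a valid under b. Then for mechanism M ∈ {GSP, VCG}, the social welfare plus revenue of a is at least the optimal social welfare: Wel(a) + Rev^M(a, b) ≥ Wel^opt. -/

import Mathlib

/-!
Summation by parts (the click-through rates are nonnegative and nonincreasing) reduces
`Wel(a') ≤ Wel(a) + Rev(a)` to prefix inequalities: any `t` items have total value at most
`z₀ + ⋯ + z_{t-1}`, where `zₖ` is the value of the item in slot `k` of `a` plus what the mechanism
collects for slot `k`. Among the chosen items, pair each one ranked outside the top `t` of `a`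
with a top-`t` item that was not chosen. If both belong to the same bidder, the outside one is
worth less, since a bidder's bids are proportional to its values; otherwise it is worth at most
its own bid. Under GSP that bid is at most the price of the partner's slot. Under VCG it is
charged to the partner's owner `j`: `j` is charged at most as often as it has items in the top
`t`, so the charged items and the top-`t` items of other bidders are at most `t` items not owned
by `j`, and their bids add up to at most the `t` largest bids without `j`, which the sorted
allocation witnessing `W^opt_{-j}` collects.
-/

open Finset MeasureTheory

namespace SponsoredShopping

noncomputable section

/-- An item is a pair `(i, j)`: bidder `i`'s `j`-th item. -/
abbrev Item (n m : ℕ) : Type := Fin n × Fin m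

/-- An allocation assigns to each rank `k` (0-based) an item. -/
abbrev Alloc (n m : ℕ) : Type := Fin (n * m) ≃ Item n m

/-- Maximum of `f` over a finite set, with value `0` on the empty set. -/
def fmax {ι : Type*} (s : Finset ι) (f : ι → ℝ) : ℝ :=
  WithBot.unbotD 0 (s.sup fun i => (f i : WithBot ℝ))

variable {n m : ℕ}

/-- An allocation is valid under bids `b` if bids are nonincreasing along ranks. -/
def ValidUnder (b : Item n m → ℝ) (a : Alloc n m) : Prop :=
  ∀ k k' : Fin (n * m), k ≤ k' → b (a k') ≤ b (a k)

/-- The value of bidder `i` under allocation `a`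
(`c k` is the CTR of slot `k`, with `c k = 0` for `k ≥ K`). -/
def bidderValue (c : ℕ → ℝ) (v : Item n m → ℝ) (a : Alloc n m) (i : Fin n) : ℝ :=
  ∑ k : Fin (n * m), if (a k).1 = i then c k * v (a k) else 0

/-- Social welfare of an allocation. -/
def wel (c : ℕ → ℝ) (v : Item n m → ℝ) (a : Alloc n m) : ℝ :=
  ∑ k : Fin (n * m), c k * v (a k)

/-- Optimal social welfare. -/
def welOpt (c : ℕ → ℝ) (v : Item n m → ℝ) : ℝ :=
  fmax (univ : Finset (Alloc n m)) (wel c v)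

/-- GSP per-click price of the item ranked `k`: highest bid among lower-ranked
items belonging to other bidders (`0` if none). -/
def gspPrice (b : Item n m → ℝ) (a : Alloc n m) (k : Fin (n * m)) : ℝ :=
  fmax (univ.filter fun k' : Fin (n * m) => k < k' ∧ (a k').1 ≠ (a k).1)
    (fun k' => b (a k'))

/-- Total GSP payment of bidder `i`. -/
def gspPay (c : ℕ → ℝ) (b : Item n m → ℝ) (a : Alloc n m) (i : Fin n) : ℝ :=
  ∑ k : Fin (n * m), if (a k).1 = i then c k * gspPrice b a k else 0

/-- Bid-welfare of an allocation. -/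
def bidWelfare (c : ℕ → ℝ) (b : Item n m → ℝ) (a : Alloc n m) : ℝ :=
  ∑ k : Fin (n * m), c k * b (a k)

/-- Bids with bidder `i`'s bids zeroed out. -/
def exclBids (b : Item n m → ℝ) (i : Fin n) : Item n m → ℝ :=
  fun x => if x.1 = i then 0 else b x

/-- Bid-welfare obtained by bidders other than `i` in allocation `a`. -/
def othersWelfare (c : ℕ → ℝ) (b : Item n m → ℝ) (a : Alloc n m) (i : Fin n) : ℝ :=
  ∑ k : Fin (n * m), if (a k).1 ≠ i then c k * b (a k) else 0

/-- Optimal counterfactual bid-welfare without bidder `i`. -/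
def woptWithout (c : ℕ → ℝ) (b : Item n m → ℝ) (i : Fin n) : ℝ :=
  fmax (univ : Finset (Alloc n m)) (fun a' => bidWelfare c (exclBids b i) a')

/-- VCG payment of bidder `i`. -/
def vcgPay (c : ℕ → ℝ) (b : Item n m → ℝ) (a : Alloc n m) (i : Fin n) : ℝ :=
  woptWithout c b i - othersWelfare c b a i

/-- The two mechanisms considered. -/
inductive Mech | gsp | vcg

/-- Payment of bidder `i` under mechanism `M`. -/
def pay : Mech → (ℕ → ℝ) → (Item n m → ℝ) → Alloc n m → Fin n → ℝ
  | .gsp => gspPay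
  | .vcg => vcgPay

/-- `S_k(a)`: the set of items assigned to the first `k` slots in `a`. -/
def topk (a : Alloc n m) (k : ℕ) : Finset (Item n m) :=
  (univ.filter fun r : Fin (n * m) => (r : ℕ) < k).image a

lemma fmax_eq_sup' {ι : Type*} {s : Finset ι} (hs : s.Nonempty) (f : ι → ℝ) :
    fmax s f = s.sup' hs f := by
  rw [fmax, ← WithBot.unbotD_coe 0 (s.sup' hs f), coe_sup']
  rfl

lemma le_fmax {ι : Type*} {s : Finset ι} {f : ι → ℝ} {i : ι} (hi : i ∈ s) : f i ≤ fmax s f := by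
  rw [fmax_eq_sup' ⟨i, hi⟩]
  exact le_sup' f hi

lemma fmax_nonneg {ι : Type*} {s : Finset ι} {f : ι → ℝ} (hf : ∀ i ∈ s, 0 ≤ f i) :
    0 ≤ fmax s f := by
  rcases s.eq_empty_or_nonempty with rfl | ⟨i, hi⟩
  · simp [fmax]
  · exact (hf i hi).trans (le_fmax hi)

lemma sum_range_mul_eq_add_sum_mul_partialSum (c w : ℕ → ℝ) (N : ℕ) :
    ∑ k ∈ range N, c k * w k = c N * ∑ k ∈ range N, w k
      + ∑ t ∈ range N, (c t - c (t + 1)) * ∑ k ∈ range (t + 1), w k := by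
  induction N with
  | zero => simp
  | succ N ih => rw [sum_range_succ, ih]; simp only [sum_range_succ _ N]; ring

lemma sum_range_mul_le_of_forall_sum_range_le {c y z : ℕ → ℝ} {N : ℕ} (hc0 : ∀ k, 0 ≤ c k)
    (hc : Antitone c) (h : ∀ t ≤ N, ∑ k ∈ range t, y k ≤ ∑ k ∈ range t, z k) :
    ∑ k ∈ range N, c k * y k ≤ ∑ k ∈ range N, c k * z k := by
  rw [sum_range_mul_eq_add_sum_mul_partialSum c y, sum_range_mul_eq_add_sum_mul_partialSum c z]
  refine add_le_add (mul_le_mul_of_nonneg_left (h N le_rfl) (hc0 N)) (sum_le_sum fun t ht => ?_)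
  exact mul_le_mul_of_nonneg_left (h (t + 1) (mem_range.mp ht)) (sub_nonneg.mpr (hc t.le_succ))

def firstRanks (N t : ℕ) : Finset (Fin N) := {k | (k : ℕ) < t}

lemma card_firstRanks {N t : ℕ} (ht : t ≤ N) : #(firstRanks N t) = t := by
  simp [firstRanks, Fin.card_filter_val_lt, ht]

lemma card_firstRanks_card {N : ℕ} (S : Finset (Fin N)) : #(firstRanks N #S) = #S :=
  card_firstRanks (card_le_univ S |>.trans_eq (Fintype.card_fin N))

lemma sum_range_dite_eq_sum_firstRanks {N t : ℕ} (ht : t ≤ N) (f : Fin N → ℝ) :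
    ∑ k ∈ range t, (if h : k < N then f ⟨k, h⟩ else 0) = ∑ k ∈ firstRanks N t, f k := by
  refine (sum_nbij (fun k : Fin N => (k : ℕ)) ?_ ?_ ?_ ?_).symm
  · simp [firstRanks]
  · exact fun k _ k' _ h => Fin.ext h
  · intro k hk
    exact ⟨⟨k, by simp at hk; omega⟩, by simpa [firstRanks] using hk, rfl⟩
  · simp

lemma sum_mul_le_of_forall_sum_firstRanks_le {N : ℕ} {c : ℕ → ℝ} {y z : Fin N → ℝ}
    (hc0 : ∀ k, 0 ≤ c k) (hc : Antitone c)
    (h : ∀ t ≤ N, ∑ k ∈ firstRanks N t, y k ≤ ∑ k ∈ firstRanks N t, z k) :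
    ∑ k : Fin N, c k * y k ≤ ∑ k : Fin N, c k * z k := by
  have key := sum_range_mul_le_of_forall_sum_range_le hc0 hc
    (y := fun k => if h : k < N then y ⟨k, h⟩ else 0)
    (z := fun k => if h : k < N then z ⟨k, h⟩ else 0)
    fun t ht => by
      rw [sum_range_dite_eq_sum_firstRanks ht y, sum_range_dite_eq_sum_firstRanks ht z]
      exact h t ht
  simpa only [sum_fin_eq_sum_range, mul_dite, mul_zero] using key

lemma sum_mul_comp_perm_le {N : ℕ} {c : ℕ → ℝ} {f z : Fin N → ℝ} (hc0 : ∀ k, 0 ≤ c k)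
    (hc : Antitone c) (h : ∀ S : Finset (Fin N), ∑ s ∈ S, f s ≤ ∑ k ∈ firstRanks N #S, z k)
    (π : Equiv.Perm (Fin N)) : ∑ k : Fin N, c k * f (π k) ≤ ∑ k : Fin N, c k * z k :=
  sum_mul_le_of_forall_sum_firstRanks_le hc0 hc fun t ht => by
    simpa only [sum_map, card_map, card_firstRanks ht, Equiv.coe_toEmbedding]
      using h ((firstRanks N t).map π.toEmbedding)

lemma lt_of_mem_firstRanks_of_notMem {N t : ℕ} {k s : Fin N} (hk : k ∈ firstRanks N t)
    (hs : s ∉ firstRanks N t) : k < s := by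
  simp only [firstRanks, mem_filter, mem_univ, true_and, not_lt] at hk hs
  exact Fin.lt_def.mpr (by omega)

lemma exists_bijOn_sdiff_of_card_eq {α : Type*} [DecidableEq α] {S A : Finset α} (h : #S = #A) :
    ∃ φ : α → α, Set.BijOn φ ↑(S \ A) ↑(A \ S) := by
  cases isEmpty_or_nonempty α
  · exact ⟨id, by simp [Subsingleton.elim S A]⟩
  · apply Set.Finite.exists_bijOn_of_encard_eq (finite_toSet _)
    simp only [Set.encard_coe_eq_coe_finsetCard, card_sdiff_comm h]

lemma sum_le_sum_add_sum_of_bijOn {α : Type*} [DecidableEq α] {S A : Finset α} {φ : α → α}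
    (hφ : Set.BijOn φ ↑(S \ A) ↑(A \ S)) {f g χ : α → ℝ} (hin : ∀ s ∈ S ∩ A, f s ≤ g s)
    (hout : ∀ s ∈ S \ A, f s ≤ g (φ s) + χ s) :
    ∑ s ∈ S, f s ≤ ∑ k ∈ A, g k + ∑ s ∈ S \ A, χ s := by
  have hswap : ∑ s ∈ S \ A, g (φ s) = ∑ k ∈ A \ S, g k :=
    sum_nbij φ hφ.mapsTo hφ.injOn hφ.surjOn fun _ _ => rfl
  rw [← sum_inter_add_sum_sdiff S A, ← sum_inter_add_sum_sdiff A S, inter_comm A S, ← hswap,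
    add_assoc, ← sum_add_distrib]
  exact add_le_add (sum_le_sum hin) (sum_le_sum hout)

lemma sum_le_sum_firstRanks_of_dominated {N t : ℕ} {f z : Fin N → ℝ} (hz : ∀ k, 0 ≤ z k)
    (hfz : ∀ k s, k ≤ s → f s ≤ z k) {T : Finset (Fin N)} (hT : #T ≤ t) :
    ∑ s ∈ T, f s ≤ ∑ k ∈ firstRanks N t, z k := by
  obtain ⟨φ, hφ⟩ := exists_bijOn_sdiff_of_card_eq (card_firstRanks_card T).symm
  calc ∑ s ∈ T, f s ≤ ∑ k ∈ firstRanks N #T, z k + ∑ s ∈ T \ firstRanks N #T, (0 : ℝ) := by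
        refine sum_le_sum_add_sum_of_bijOn hφ (fun s _ => hfz s s le_rfl) fun s hs => ?_
        rw [add_zero]
        exact hfz _ _ (lt_of_mem_firstRanks_of_notMem (mem_sdiff.mp (hφ.mapsTo hs)).1
          (mem_sdiff.mp hs).2).le
    _ ≤ ∑ k ∈ firstRanks N t, z k := by
        rw [sum_const_zero, add_zero]
        refine sum_le_sum_of_subset_of_nonneg ?_ fun k _ _ => hz k
        intro k
        simp only [firstRanks, mem_filter, mem_univ, true_and]
        omega

def sortDesc {N : ℕ} (g : Fin N → ℝ) : Equiv.Perm (Fin N) := Tuple.sort (-g)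

lemma antitone_comp_sortDesc {N : ℕ} (g : Fin N → ℝ) : Antitone (g ∘ sortDesc g) := by
  intro k k' hkk'
  simpa [sortDesc] using Tuple.monotone_sort (-g) hkk'

lemma sum_le_sum_firstRanks_sortDesc {N t : ℕ} {g : Fin N → ℝ} (hg : ∀ k, 0 ≤ g k)
    {T : Finset (Fin N)} (hT : #T ≤ t) :
    ∑ s ∈ T, g s ≤ ∑ k ∈ firstRanks N t, g (sortDesc g k) := by
  simpa using sum_le_sum_firstRanks_of_dominated (t := t) (fun k => hg _)
    (fun k s hks => antitone_comp_sortDesc g hks) (T := T.map (sortDesc g).symm.toEmbedding)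
    (by rwa [card_map])

lemma sum_add_sum_le_sum_firstRanks_sortDesc {N : ℕ} {g : Fin N → ℝ} (hg : ∀ k, 0 ≤ g k)
    {A D Z : Finset (Fin N)} {t : ℕ} (hZ : ∀ k ∈ Z, g k = 0) (hZA : Z ⊆ A) (hDA : Disjoint D A)
    (hDZ : #D ≤ #Z) (hA : #A ≤ t) :
    ∑ s ∈ D, g s + ∑ k ∈ A, g k ≤ ∑ k ∈ firstRanks N t, g (sortDesc g k) := by
  have hAZ : ∑ k ∈ A \ Z, g k = ∑ k ∈ A, g k :=
    sum_subset sdiff_subset fun k hkA hk => hZ k (by simpa [hkA] using hk)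
  rw [← hAZ, ← sum_union (hDA.mono_right sdiff_subset)]
  refine sum_le_sum_firstRanks_sortDesc hg ((card_union_le _ _).trans ?_)
  rw [card_sdiff_of_subset hZA]
  have := card_le_card hZA
  omega

section Auction

variable {n m : ℕ} {v b : Item n m → ℝ} {a : Alloc n m}

lemma welOpt_le_of_forall_sum_le {c : ℕ → ℝ} (hc0 : ∀ k, 0 ≤ c k) (hc : Antitone c)
    {z : Fin (n * m) → ℝ}
    (h : ∀ S : Finset (Fin (n * m)), ∑ s ∈ S, v (a s) ≤ ∑ k ∈ firstRanks (n * m) #S, z k) :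
    welOpt c v ≤ ∑ k : Fin (n * m), c k * z k := by
  rw [welOpt, fmax_eq_sup' ⟨a, mem_univ a⟩]
  refine sup'_le _ _ fun a' _ => ?_
  simpa [wel] using sum_mul_comp_perm_le hc0 hc h (a'.trans a.symm)

lemma exclBids_nonneg (hb : ∀ x, 0 ≤ b x) (i : Fin n) (x : Item n m) : 0 ≤ exclBids b i x := by
  unfold exclBids
  split_ifs
  exacts [le_rfl, hb x]

lemma value_le_add_exclBids (hv : ∀ x, 0 ≤ v x) (hvb : ∀ x, v x ≤ b x)
    (hbv : ∀ x y : Item n m, x.1 = y.1 → b x ≤ b y → v x ≤ v y) (ha : ValidUnder b a)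
    {k s : Fin (n * m)} (hks : k ≤ s) : v (a s) ≤ v (a k) + exclBids b (a k).1 (a s) := by
  unfold exclBids
  split_ifs with hown
  · simpa using hbv _ _ hown (ha k s hks)
  · linarith [hv (a k), hvb (a s)]

lemma gspPrice_nonneg (hb : ∀ x, 0 ≤ b x) (k : Fin (n * m)) : 0 ≤ gspPrice b a k :=
  fmax_nonneg fun _ _ => hb _

lemma exclBids_le_gspPrice (hb : ∀ x, 0 ≤ b x) {k s : Fin (n * m)} (hks : k < s) :
    exclBids b (a k).1 (a s) ≤ gspPrice b a k := by
  unfold exclBids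
  split_ifs with hown
  · exact gspPrice_nonneg hb k
  · exact le_fmax (f := fun k' => b (a k')) (by simp [hks, hown])

lemma sum_gspPay (c : ℕ → ℝ) (b : Item n m → ℝ) (a : Alloc n m) :
    ∑ i, gspPay c b a i = ∑ k : Fin (n * m), c k * gspPrice b a k := by
  simp only [gspPay]
  rw [sum_comm]
  simp

theorem welOpt_le_wel_add_sum_gspPay {c : ℕ → ℝ} (hv : ∀ x, 0 ≤ v x) (hvb : ∀ x, v x ≤ b x)
    (hbv : ∀ x y : Item n m, x.1 = y.1 → b x ≤ b y → v x ≤ v y) (ha : ValidUnder b a)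
    (hc0 : ∀ k, 0 ≤ c k) (hc : Antitone c) :
    welOpt c v ≤ wel c v a + ∑ i, gspPay c b a i := by
  have hb : ∀ x, 0 ≤ b x := fun x => (hv x).trans (hvb x)
  have hdom : ∀ k s, k ≤ s → v (a s) ≤ v (a k) + gspPrice b a k := by
    intro k s hks
    rcases hks.lt_or_eq with hlt | rfl
    · linarith [value_le_add_exclBids hv hvb hbv ha hks, exclBids_le_gspPrice (a := a) hb hlt]
    · exact le_add_of_nonneg_right (gspPrice_nonneg hb k)
  calc welOpt c v ≤ ∑ k : Fin (n * m), c k * (v (a k) + gspPrice b a k) :=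
        welOpt_le_of_forall_sum_le hc0 hc fun S => sum_le_sum_firstRanks_of_dominated
          (fun k => add_nonneg (hv _) (gspPrice_nonneg hb k)) hdom le_rfl
    _ = wel c v a + ∑ i, gspPay c b a i := by
        simp only [mul_add, sum_add_distrib, wel, sum_gspPay]

lemma othersWelfare_eq_bidWelfare_exclBids (c : ℕ → ℝ) (b : Item n m → ℝ) (a : Alloc n m)
    (i : Fin n) : othersWelfare c b a i = bidWelfare c (exclBids b i) a := by
  refine sum_congr rfl fun k _ => ?_
  unfold exclBids
  split_ifs <;> simp_all

lemma sum_value_le_sum_firstRanks_vcg (hv : ∀ x, 0 ≤ v x) (hvb : ∀ x, v x ≤ b x)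
    (hbv : ∀ x y : Item n m, x.1 = y.1 → b x ≤ b y → v x ≤ v y) (ha : ValidUnder b a)
    (S : Finset (Fin (n * m))) :
    ∑ s ∈ S, v (a s) ≤ ∑ k ∈ firstRanks (n * m) #S, (v (a k) + ∑ j,
      (exclBids b j (a (sortDesc (fun k => exclBids b j (a k)) k)) - exclBids b j (a k))) := by
  set σ : Fin n → Equiv.Perm (Fin (n * m)) := fun j => sortDesc fun k => exclBids b j (a k)
  set A := firstRanks (n * m) #S
  have hSA : #S = #A := (card_firstRanks_card S).symm
  obtain ⟨φ, hφ⟩ := exists_bijOn_sdiff_of_card_eq hSA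
  have hφlt : ∀ s ∈ S \ A, φ s < s := fun s hs =>
    lt_of_mem_firstRanks_of_notMem (mem_sdiff.mp (hφ.mapsTo hs)).1 (mem_sdiff.mp hs).2
  have hcharge : ∀ j, ∑ s ∈ S \ A with (a (φ s)).1 = j, exclBids b j (a s)
      ≤ ∑ k ∈ A, exclBids b j (a (σ j k)) - ∑ k ∈ A, exclBids b j (a k) := by
    intro j
    have hcard : #{s ∈ S \ A | (a (φ s)).1 = j} ≤ #{k ∈ A | (a k).1 = j} :=
      card_le_card_of_injOn φ
        (fun s hs => mem_filter.mpr ⟨(mem_sdiff.mp (hφ.mapsTo (mem_filter.mp hs).1)).1,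
          (mem_filter.mp hs).2⟩)
        (hφ.injOn.mono (coe_subset.mpr (filter_subset _ _)))
    have := sum_add_sum_le_sum_firstRanks_sortDesc (g := fun k => exclBids b j (a k))
      (fun k => exclBids_nonneg (fun x => (hv x).trans (hvb x)) j _)
      (fun k hk => by simp [exclBids, (mem_filter.mp hk).2]) (filter_subset _ _)
      (sdiff_disjoint.mono_left (filter_subset _ _)) hcard hSA.ge
    linarith
  have hfiber : ∑ s ∈ S \ A, exclBids b (a (φ s)).1 (a s)
      = ∑ j, ∑ s ∈ S \ A with (a (φ s)).1 = j, exclBids b j (a s) := by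
    rw [← sum_fiberwise (S \ A) (fun s => (a (φ s)).1)]
    exact sum_congr rfl fun j _ => sum_congr rfl fun s hs => by rw [(mem_filter.mp hs).2]
  calc ∑ s ∈ S, v (a s)
      ≤ ∑ k ∈ A, v (a k) + ∑ s ∈ S \ A, exclBids b (a (φ s)).1 (a s) :=
        sum_le_sum_add_sum_of_bijOn hφ (fun _ _ => le_rfl) fun s hs =>
          value_le_add_exclBids hv hvb hbv ha (hφlt s hs).le
    _ ≤ ∑ k ∈ A, v (a k)
        + ∑ j, (∑ k ∈ A, exclBids b j (a (σ j k)) - ∑ k ∈ A, exclBids b j (a k)) := by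
        rw [hfiber]
        gcongr with j
        exact hcharge j
    _ = _ := by
        rw [sum_add_distrib, sum_comm (s := A)]
        simp only [sum_sub_distrib, σ]

theorem welOpt_le_wel_add_sum_vcgPay {c : ℕ → ℝ} (hv : ∀ x, 0 ≤ v x) (hvb : ∀ x, v x ≤ b x)
    (hbv : ∀ x y : Item n m, x.1 = y.1 → b x ≤ b y → v x ≤ v y) (ha : ValidUnder b a)
    (hc0 : ∀ k, 0 ≤ c k) (hc : Antitone c) :
    welOpt c v ≤ wel c v a + ∑ i, vcgPay c b a i := by
  set σ : Fin n → Equiv.Perm (Fin (n * m)) := fun j => sortDesc fun k => exclBids b j (a k)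
  calc welOpt c v ≤ ∑ k : Fin (n * m), c k * (v (a k) + ∑ j,
        (exclBids b j (a (σ j k)) - exclBids b j (a k))) :=
        welOpt_le_of_forall_sum_le hc0 hc (sum_value_le_sum_firstRanks_vcg hv hvb hbv ha)
    _ = wel c v a
          + ∑ j, (bidWelfare c (exclBids b j) ((σ j).trans a) - othersWelfare c b a j) := by
        simp only [othersWelfare_eq_bidWelfare_exclBids, bidWelfare, wel, mul_add, mul_sum,
          mul_sub, sum_add_distrib, sum_sub_distrib, Equiv.trans_apply]
        rw [sum_comm (s := (univ : Finset (Fin (n * m)))),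
          sum_comm (s := (univ : Finset (Fin (n * m))))]
    _ ≤ wel c v a + ∑ i, vcgPay c b a i := by
        gcongr with j
        exact sub_le_sub_right
          (le_fmax (f := fun a' => bidWelfare c (exclBids b j) a') (mem_univ _)) _

end Auction

theorem welfare_add_revenue_ge_optimal_welfare_general
    (n m : ℕ) (v : Item n m → ℝ) (c : ℕ → ℝ)
    (hv : ∀ x : Item n m, 0 ≤ v x)
    (hc0 : ∀ k, 0 ≤ c k) (hcmono : Antitone c)
    (α : Fin n → ℝ) (hα : ∀ i, 1 ≤ α i)
    (a : Alloc n m) (ha : ValidUnder (fun x => α x.1 * v x) a) (M : Mech) :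
    welOpt c v ≤ wel c v a + ∑ i : Fin n, pay M c (fun x => α x.1 * v x) a i := by
  have hvb : ∀ x : Item n m, v x ≤ α x.1 * v x := fun x => le_mul_of_one_le_left (hv x) (hα _)
  have hbv : ∀ x y : Item n m, x.1 = y.1 → α x.1 * v x ≤ α y.1 * v y → v x ≤ v y := by
    intro x y hxy hle
    rw [hxy] at hle
    exact le_of_mul_le_mul_left hle (one_pos.trans_le (hα y.1))
  cases M
  · exact welOpt_le_wel_add_sum_gspPay hv hvb hbv ha hc0 hcmono
  · exact welOpt_le_wel_add_sum_vcgPay hv hvb hbv ha hc0 hcmono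

/-- Smoothness inequality: welfare plus revenue of any valid allocation is at
least the optimal welfare, for both GSP and VCG. -/
theorem welfare_add_revenue_ge_optimal_welfare
    (n m K : ℕ) (v : Item n m → ℝ) (c : ℕ → ℝ)
    (hv : ∀ x : Item n m, 0 ≤ v x)
    (hvmono : ∀ (i : Fin n) (j j' : Fin m), j ≤ j' → v (i, j') ≤ v (i, j))
    (hc1 : c 0 ≤ 1) (hc0 : ∀ k, 0 ≤ c k) (hcmono : Antitone c)
    (hcK : ∀ k, K ≤ k → c k = 0)
    (α : Fin n → ℝ) (hα : ∀ i, 1 ≤ α i)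
    (a : Alloc n m) (ha : ValidUnder (fun x => α x.1 * v x) a) (M : Mech) :
    welOpt c v ≤ wel c v a + ∑ i : Fin n, pay M c (fun x => α x.1 * v x) a i :=
  welfare_add_revenue_ge_optimal_welfare_general n m v c hv hc0 hcmono α hα a ha M

end
end SponsoredShopping
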